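/- arXiv:2308.04906 — 2 statements merged into one kernel-verified Lean document; each statement's English description precedes it below -/
import Mathlib

section
/- Let (λ_n)_{n∈ℤ} be real numbers with λ_{n+1} − λ_n ≥ γ > 0 for all n, and let T > π/γ. Then for any finitely supported complex sequence (a_n), if ∫_{−T}^{T} |Σ_n a_n e^{i λ_n t}|² dt = 0 then a_n = 0 for all n. -/
/-!
The function `F(z) = ∑ aₙ exp(i λₙ z)` is entire. A continuous nonnegative integrand with zero
integral vanishes, so `F` vanishes on `(-T, T)`, hence everywhere by the identity theorem. The gap
condition makes the frequencies distinct, so the characters `t ↦ exp(i λₙ t)` of `ℝ` are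
distinct and therefore linearly independent (Dedekind), which forces every `aₙ` to vanish.
-/

open Real MeasureTheory Set Filter Topology Function Complex

theorem eqOn_zero_of_intervalIntegral_norm_sq_eq_zero {E : Type*} [NormedAddCommGroup E]
    {f : ℝ → E} (hf : Continuous f) {a b : ℝ} (hab : a ≤ b)
    (h : ∫ t in a..b, ‖f t‖ ^ 2 = 0) : EqOn f 0 (Ioc a b) := by
  have hcont : Continuous fun t => ‖f t‖ ^ 2 := hf.norm.pow 2
  have hae : (fun t => ‖f t‖ ^ 2) =ᵐ[volume.restrict (Ioc a b)] 0 :=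
    (intervalIntegral.integral_eq_zero_iff_of_le_of_nonneg_ae hab
      (ae_of_all _ fun t => by positivity) (hcont.intervalIntegrable a b)).mp h
  intro t ht
  simpa using Measure.eqOn_Ioc_of_ae_eq volume hae hcont.continuousOn continuousOn_const ht

theorem Differentiable.eq_zero_of_forall_mem_Ioo_eq_zero {E : Type*} [NormedAddCommGroup E]
    [NormedSpace ℂ E] [CompleteSpace E] {f : ℂ → E} (hf : Differentiable ℂ f) {a b : ℝ}
    (hab : a < b) (h : ∀ t ∈ Ioo a b, f t = 0) : f = 0 := by
  obtain ⟨c, hc⟩ := nonempty_Ioo.mpr hab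
  have hofReal : Tendsto ((↑) : ℝ → ℂ) (𝓝[≠] c) (𝓝[≠] (c : ℂ)) :=
    tendsto_nhdsWithin_of_tendsto_nhds_of_eventually_within _
      (continuous_ofReal.tendsto c |>.mono_left nhdsWithin_le_nhds)
      (eventually_nhdsWithin_of_forall fun t ht => by simpa using ht)
  have hfreq : ∃ᶠ z in 𝓝[≠] (c : ℂ), f z = 0 :=
    hofReal.frequently <| Eventually.frequently <|
      eventually_nhdsWithin_of_eventually_nhds <|
        eventually_of_mem (Ioo_mem_nhds hc.1 hc.2) h
  funext z
  exact (analyticOnNhd_univ_iff_differentiable.mpr hf)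
    |>.eqOn_zero_of_preconnected_of_frequently_eq_zero isPreconnected_univ (mem_univ _) hfreq
      (mem_univ z)

-- Written on `Multiplicative ℝ` so that Dedekind's independence of monoid homs applies.
noncomputable def expMulIChar (ξ : ℝ) : Multiplicative ℝ →* ℂ where
  toFun t := exp (I * ξ * t.toAdd)
  map_one' := by simp
  map_mul' x y := by simp [mul_add, Complex.exp_add]

theorem expMulIChar_injective : Injective expMulIChar := by
  intro ξ η h
  by_contra hne
  have hd : ((ξ : ℂ) - η) ≠ 0 := sub_ne_zero.mpr (by exact_mod_cast hne)
  -- at `t = π / (ξ - η)` the two characters differ by the factor `exp (π i) = -1`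
  set t : ℝ := π / (ξ - η)
  have ht : expMulIChar ξ (.ofAdd t) = expMulIChar η (.ofAdd t) := by rw [h]
  have hquot : exp (I * ξ * t) / exp (I * η * t) = -1 := by
    rw [← Complex.exp_sub, ← exp_pi_mul_I]
    congr 1
    simp only [t]
    push_cast
    field_simp
  have : exp (I * ξ * t) / exp (I * η * t) = 1 := by
    simpa [expMulIChar, div_self (Complex.exp_ne_zero _)] using congrArg (· / exp (I * η * t)) ht
  norm_num [this] at hquot

theorem linearIndependent_exp_I_mul {ι : Type*} {lam : ι → ℝ} (hlam : Injective lam) :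
    LinearIndependent ℂ fun n (t : ℝ) => exp (I * lam n * t) := by
  have hchar := (linearIndependent_monoidHom (Multiplicative ℝ) ℂ).comp _
    (expMulIChar_injective.comp hlam)
  exact hchar.map' (LinearMap.funLeft ℂ ℂ Multiplicative.ofAdd)
    (LinearMap.ker_eq_bot.mpr (LinearMap.funLeft_injective_of_surjective _ _ _
      Multiplicative.ofAdd.surjective))

/-- Uniqueness consequence of Ingham's inequality. -/
theorem ingham_uniqueness (lam : ℤ → ℝ) (γ : ℝ) (hγ : 0 < γ)
    (hgap : ∀ n : ℤ, γ ≤ lam (n + 1) - lam n) (T : ℝ) (hT : π / γ < T)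
    (s : Finset ℤ) (a : ℤ → ℂ)
    (hzero : ∫ t in (-T)..T, ‖∑ n ∈ s, a n * Complex.exp (Complex.I * (lam n) * t)‖ ^ 2 = 0) :
    ∀ n ∈ s, a n = 0 := by
  have hT0 : 0 < T := (div_pos pi_pos hγ).trans hT
  have hlam : Injective lam :=
    (strictMono_int_of_lt_succ fun n => by linarith [hgap n]).injective
  set F : ℂ → ℂ := fun z => ∑ n ∈ s, a n * exp (I * lam n * z)
  have hF : Differentiable ℂ F := by fun_prop
  have hF_Ioc : EqOn (fun t : ℝ => F t) 0 (Ioc (-T) T) :=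
    eqOn_zero_of_intervalIntegral_norm_sq_eq_zero (hF.continuous.comp continuous_ofReal)
      (by linarith) hzero
  have hF_zero : F = 0 :=
    hF.eq_zero_of_forall_mem_Ioo_eq_zero (by linarith) fun t ht => hF_Ioc (Ioo_subset_Ioc_self ht)
  refine linearIndependent_iff'.mp (linearIndependent_exp_I_mul hlam) s a (funext fun t => ?_)
  simpa [Finset.sum_apply] using congrFun hF_zero t
end

section
/- Let H be a real Hilbert space, A : H → L²(0,T) bounded linear with ‖s‖_H ≤ C‖As‖ for all s, and ℓ ∈ H*. Let s̄ be the minimizer of J(s) = (1/2)‖As‖² + ℓ(s). Then u = A s̄ ∈ L²(0,T) satisfies ⟨As, u⟩_{L²} + ℓ(s) = 0 for every s ∈ H, and among all v ∈ L²(0,T) satisfying ⟨As, v⟩ + ℓ(s) = 0 for all s ∈ H, u has minimal L²-norm. -/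
/-!
The functional `J` is differentiable with derivative `s ↦ ⟪A s, A s̄⟫ + ℓ s` at `s̄`, so the
Euler–Lagrange equation at the minimizer is exactly the control constraint for `u = A s̄`.
Any other admissible `v` has the same inner products with the range of `A`, in particular
`⟪u, v⟫ = ⟪u, u⟫ = ‖u‖²`, and Cauchy–Schwarz gives `‖u‖ ≤ ‖v‖`.
-/

open MeasureTheory

section EulerLagrange

variable {E F : Type*} [NormedAddCommGroup E] [NormedSpace ℝ E]
  [NormedAddCommGroup F] [InnerProductSpace ℝ F]

theorem hasFDerivAt_half_norm_sq_map_add (A : E →L[ℝ] F) (ℓ : E →L[ℝ] ℝ) (x : E) :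
    HasFDerivAt (fun s => (1 / 2) * ‖A s‖ ^ 2 + ℓ s)
      ((innerSL ℝ (A x)).comp A + ℓ) x := by
  refine ((((A.hasFDerivAt (x := x)).norm_sq).const_mul (1 / 2 : ℝ)).add
    ℓ.hasFDerivAt).congr_fderiv ?_
  ext s
  simp

theorem inner_map_add_eq_zero_of_isLocalMin (A : E →L[ℝ] F) (ℓ : E →L[ℝ] ℝ) {x : E}
    (hx : IsLocalMin (fun s => (1 / 2) * ‖A s‖ ^ 2 + ℓ s) x) (s : E) :
    inner ℝ (A s) (A x) + ℓ s = 0 := by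
  have h := congrArg (· s) (hx.hasFDerivAt_eq_zero (hasFDerivAt_half_norm_sq_map_add A ℓ x))
  simpa [real_inner_comm] using h

end EulerLagrange

theorem norm_le_of_inner_eq_norm_sq {F : Type*} [NormedAddCommGroup F] [InnerProductSpace ℝ F]
    {u v : F} (h : inner ℝ u v = ‖u‖ ^ 2) : ‖u‖ ≤ ‖v‖ := by
  have hcs : ‖u‖ ^ 2 ≤ ‖u‖ * ‖v‖ := h ▸ real_inner_le_norm u v
  nlinarith [norm_nonneg u, norm_nonneg v]

theorem hum_minimal_norm_control_general (H : Type*) [NormedAddCommGroup H]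
    [InnerProductSpace ℝ H] (T : ℝ)
    (A : H →L[ℝ] Lp ℝ 2 (volume.restrict (Set.Ioo (0 : ℝ) T)))
    (ℓ : H →L[ℝ] ℝ) (J : H → ℝ)
    (hJ : ∀ s, J s = (1 / 2) * ‖A s‖ ^ 2 + ℓ s)
    (sbar : H) (hmin : ∀ s : H, J sbar ≤ J s) :
    (∀ s : H, inner ℝ (A s) (A sbar) + ℓ s = (0 : ℝ)) ∧
      ∀ v : Lp ℝ 2 (volume.restrict (Set.Ioo (0 : ℝ) T)),
        (∀ s : H, inner ℝ (A s) v + ℓ s = (0 : ℝ)) → ‖A sbar‖ ≤ ‖v‖ := by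
  have hJ_eq : J = fun s => (1 / 2) * ‖A s‖ ^ 2 + ℓ s := funext hJ
  have hlocal : IsLocalMin J sbar := Filter.Eventually.of_forall hmin
  have hcrit := inner_map_add_eq_zero_of_isLocalMin A ℓ (hJ_eq ▸ hlocal)
  refine ⟨hcrit, fun v hv => norm_le_of_inner_eq_norm_sq ?_⟩
  rw [← real_inner_self_eq_norm_sq]
  linarith [hcrit sbar, hv sbar]

/-- The HUM minimizer yields the control of minimal L²-norm. -/
theorem hum_minimal_norm_control (H : Type*) [NormedAddCommGroup H]
    [InnerProductSpace ℝ H] [CompleteSpace H] (T : ℝ)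
    (A : H →L[ℝ] Lp ℝ 2 (volume.restrict (Set.Ioo (0 : ℝ) T)))
    (C : ℝ) (hobs : ∀ s : H, ‖s‖ ≤ C * ‖A s‖)
    (ℓ : H →L[ℝ] ℝ) (J : H → ℝ)
    (hJ : ∀ s, J s = (1 / 2) * ‖A s‖ ^ 2 + ℓ s)
    (sbar : H) (hmin : ∀ s : H, J sbar ≤ J s) :
    (∀ s : H, inner ℝ (A s) (A sbar) + ℓ s = (0 : ℝ)) ∧
      ∀ v : Lp ℝ 2 (volume.restrict (Set.Ioo (0 : ℝ) T)),
        (∀ s : H, inner ℝ (A s) v + ℓ s = (0 : ℝ)) → ‖A sbar‖ ≤ ‖v‖ :=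
  hum_minimal_norm_control_general H T A ℓ J hJ sbar hmin
end
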